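/- Let n_1,...,n_k be positive integers with n_1+...+n_k = n, and let x, y ∈ Ω_{n_1,...,n_k} with x ≠ y. Then there exists an integer l with 2 ≤ l ≤ k and distinct communities i_1,...,i_l ∈ [k] such that, setting i_{l+1} := i_1, t_{i_{s−1},i_s}(x,y) > 0 for all s with 2 ≤ s ≤ l+1 (i.e., (i_1,...,i_l) is an l-cycle for (x,y)). -/

import Mathlib

open Finset

/-- `t_{i,j}(x,z) = |x⁻¹(i) ∩ z⁻¹(j)|`. -/
def tcount {n k : ℕ} (x z : Fin n → Fin k) (i j : Fin k) : ℕ :=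
  (Finset.univ.filter fun v => x v = i ∧ z v = j).card

/-- `Ω_c`: community assignment mappings in which each community has at least `c·n` vertices. -/
def OmegaC {n k : ℕ} (c : ℝ) : Set (Fin n → Fin k) :=
  {x | ∀ i : Fin k, c * n ≤ ((Finset.univ.filter fun v => x v = i).card : ℝ)}

/-- `Ω_{n₁,…,n_k}`. -/
def OmegaSizes {n k : ℕ} (nsize : Fin k → ℕ) : Set (Fin n → Fin k) :=
  {x | ∀ i : Fin k, (Finset.univ.filter fun v => x v = i).card = nsize i}

/-! If a vertex lies in community `i` under `x` and in `j ≠ i` under `y`, then, since `x` and `y`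
have the same community sizes, some vertex leaves `j` as well. So every community that loses a
vertex has a successor `j ≠ i` with `t_{i,j}(x,y) > 0` that again loses a vertex. Iterating a
successor map on the finite set `[k]` runs into a periodic orbit, whose minimal period is at
least `2` because the map has no fixed points. -/

namespace Function

theorem exists_iterate_mem_periodicPts {α : Type*} [Finite α] (f : α → α) (a : α) :
    ∃ m, f^[m] a ∈ periodicPts f := by
  obtain ⟨m, n, hne, heq⟩ := Finite.exists_ne_map_eq_of_infinite (f^[·] a)
  wlog hmn : m < n generalizing m n
  · exact this n m hne.symm heq.symm (hne.symm.lt_of_le (not_lt.mp hmn))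
  refine ⟨m, mk_mem_periodicPts (Nat.sub_pos_of_lt hmn) ?_⟩
  change f^[n - m] (f^[m] a) = f^[m] a
  rw [← iterate_add_apply, Nat.sub_add_cancel hmn.le]
  exact heq.symm

theorem exists_injective_cycle_of_mapsTo {α : Type*} [Finite α] {f : α → α} {S : Set α}
    (hS : S.Nonempty) (hf : Set.MapsTo f S S) (hfix : ∀ a ∈ S, f a ≠ a) :
    ∃ (l : ℕ) (hl2 : 2 ≤ l) (cyc : Fin l → α), Injective cyc ∧
      ∀ s : Fin l, cyc s ∈ S ∧ cyc ⟨(s.1 + 1) % l, Nat.mod_lt _ (by omega)⟩ = f (cyc s) := by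
  obtain ⟨a, ha⟩ := hS
  obtain ⟨m, hper⟩ := exists_iterate_mem_periodicPts f a
  set z := f^[m] a
  have horbit : ∀ s, f^[s] z ∈ S := fun s => hf.iterate s (hf.iterate m ha)
  have hpos := minimalPeriod_pos_of_mem_periodicPts hper
  have hne_one : minimalPeriod f z ≠ 1 := fun h =>
    hfix z (horbit 0) (minimalPeriod_eq_one_iff_isFixedPt.mp h)
  refine ⟨minimalPeriod f z, by omega, fun s => f^[s.1] z, ?_, fun s => ⟨horbit s, ?_⟩⟩
  · intro s t hst
    exact Fin.ext (iterate_injOn_Iio_minimalPeriod s.2 t.2 hst)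
  · dsimp only
    rw [iterate_mod_minimalPeriod_eq, iterate_succ_apply']

theorem exists_injective_cycle_of_forall_exists_ne {α : Type*} [Finite α] {R : α → α → Prop}
    {S : Set α} (hS : S.Nonempty) (hR : ∀ a ∈ S, ∃ b ∈ S, b ≠ a ∧ R a b) :
    ∃ (l : ℕ) (hl2 : 2 ≤ l) (cyc : Fin l → α), Injective cyc ∧
      ∀ s : Fin l, R (cyc s) (cyc ⟨(s.1 + 1) % l, Nat.mod_lt _ (by omega)⟩) := by
  choose! g hgS hgne hgR using hR
  obtain ⟨l, hl2, cyc, hinj, hcyc⟩ := exists_injective_cycle_of_mapsTo hS hgS hgne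
  exact ⟨l, hl2, cyc, hinj, fun s => (hcyc s).2 ▸ hgR _ (hcyc s).1⟩

end Function

theorem exists_moved_out_of_moved_in {ι κ : Type*} [Fintype ι] [DecidableEq κ] {x y : ι → κ}
    (hcard : ∀ j, #{v | x v = j} = #{v | y v = j}) {v : ι} (hv : x v ≠ y v) :
    ∃ w, x w = y v ∧ y w ≠ y v := by
  by_contra! hstay
  have hsub : ({w | x w = y v} : Finset ι) ⊆ ({w | y w = y v} : Finset ι) := by
    intro w hw
    simp only [mem_filter, mem_univ, true_and] at hw ⊢
    exact hstay w hw
  have hfiber := eq_of_subset_of_card_le hsub (hcard (y v)).ge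
  have hvx : v ∈ ({w | x w = y v} : Finset ι) := hfiber ▸ by simp
  exact hv (by simpa using hvx)

theorem exists_tcount_pos_of_moved {n k : ℕ} {x y : Fin n → Fin k}
    (hcard : ∀ j, #{v | x v = j} = #{v | y v = j}) {i : Fin k} {v : Fin n}
    (hvx : x v = i) (hvy : y v ≠ i) :
    ∃ j ∈ {j | ∃ w, x w = j ∧ y w ≠ j}, j ≠ i ∧ 0 < tcount x y i j :=
  ⟨y v, exists_moved_out_of_moved_in hcard (hvx ▸ hvy.symm), hvy,
    card_pos.mpr ⟨v, by simp [hvx]⟩⟩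

/-- if `x, y ∈ Ω_{n₁,…,n_k}` and `x ≠ y`, then there are `2 ≤ l ≤ k` distinct
communities `i₁,…,i_l` forming an `l`-cycle for `(x,y)`: cyclically consecutive pairs satisfy
`t_{i_{s-1},i_s}(x,y) > 0`. -/
theorem stmt6 {n k : ℕ}
    (nsize : Fin k → ℕ)
    (x y : Fin n → Fin k) (hx : x ∈ OmegaSizes nsize) (hy : y ∈ OmegaSizes nsize)
    (hxy : x ≠ y) :
    ∃ (l : ℕ) (hl2 : 2 ≤ l) (_ : l ≤ k) (cyc : Fin l → Fin k),
      Function.Injective cyc ∧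
        ∀ s : Fin l, 0 < tcount x y (cyc s) (cyc ⟨(s.1 + 1) % l, Nat.mod_lt _ (by omega)⟩) := by
  have hcard : ∀ j, #{v | x v = j} = #{v | y v = j} := fun j => (hx j).trans (hy j).symm
  obtain ⟨v, hv⟩ := Function.ne_iff.mp hxy
  obtain ⟨l, hl2, cyc, hinj, hcyc⟩ :=
    Function.exists_injective_cycle_of_forall_exists_ne (R := fun i j => 0 < tcount x y i j)
      (S := {i | ∃ w, x w = i ∧ y w ≠ i}) ⟨x v, v, rfl, Ne.symm hv⟩
      fun _ ⟨_, hwx, hwy⟩ => exists_tcount_pos_of_moved hcard hwx hwy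
  exact ⟨l, hl2, by simpa using Fintype.card_le_of_injective cyc hinj, cyc, hinj, hcyc⟩
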